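/- Let π : (X,G) → (Y,G) be a factor map between G-systems, n ≥ 2 and α ≥ 0. Then the set G_n^α(X,G|π) ∪ Δ_n(X) is a closed subset of X^n, where G_n^α(X,G|π) is the set of off-diagonal n-tuples (x₁,…,x_n) with relative entropy dimension D̄(x₁,…,x_n|π) ≥ α, and Δ_n(X) is the n-th diagonal of X. -/

import Mathlib

open Filter Topology Pointwise
open scoped ENNReal

/-- A Følner sequence for a group `G`. -/
def IsFolnerSeq (G : Type*) [Group G] (F : ℕ → Finset G) : Prop :=
  (∀ n, (F n).Nonempty) ∧
    ∀ (K : Finset G) (δ : ℝ), 0 < δ →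
      ∀ᶠ n in atTop,
        ((symmDiff ((K : Set G) * ((F n : Set G))) ((F n : Set G))).ncard : ℝ) <
          δ * ((F n).card : ℝ)

/-- Amenability of a (countable discrete) group via almost invariant finite sets. -/
def IsAmenableGrp (G : Type*) [Group G] : Prop :=
  ∀ K : Finset G, K.Nonempty → ∀ δ : ℝ, 0 < δ →
    ∃ F : Finset G, F.Nonempty ∧
      ((symmDiff ((K : Set G) * (F : Set G)) (F : Set G)).ncard : ℝ) < δ * (F.card : ℝ)

/-- The finite set `A ∩ S`. -/
noncomputable def interF {G : Type*} (A : Finset G) (S : Set G) : Finset G :=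
  @Finset.filter G (fun g => g ∈ S) (Classical.decPred _) A

/-- `S` belongs to `𝓘(G)` : `|S ∩ F n| → ∞`. -/
def InI {G : Type*} (F : ℕ → Finset G) (S : Set G) : Prop :=
  Tendsto (fun n => (interF (F n) S).card) atTop atTop

/-- `D̄(S, α) = limsup_n |S ∩ F n| / |F n|^α`. -/
noncomputable def DbarAt {G : Type*} (F : ℕ → Finset G) (S : Set G) (α : ℝ) : ℝ≥0∞ :=
  atTop.limsup fun n =>
    ((interF (F n) S).card : ℝ≥0∞) / ENNReal.ofReal (((F n).card : ℝ) ^ α)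

/-- `D̲(S, α) = liminf_n |S ∩ F n| / |F n|^α`. -/
noncomputable def DlowAt {G : Type*} (F : ℕ → Finset G) (S : Set G) (α : ℝ) : ℝ≥0∞ :=
  atTop.liminf fun n =>
    ((interF (F n) S).card : ℝ≥0∞) / ENNReal.ofReal (((F n).card : ℝ) ^ α)

/-- The upper dimension `D̄(S)` of a subset `S ⊆ G`. -/
noncomputable def upperDim {G : Type*} (F : ℕ → Finset G) (S : Set G) : ℝ :=
  sInf {α : ℝ | 0 ≤ α ∧ DbarAt F S α = 0}

/-- The lower dimension `D̲(S)` of a subset `S ⊆ G`. -/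
noncomputable def lowerDim {G : Type*} (F : ℕ → Finset G) (S : Set G) : ℝ :=
  sInf {α : ℝ | 0 ≤ α ∧ DlowAt F S α = 0}

/-- A finite open cover of `X`. -/
def IsOpenCover {X : Type*} [TopologicalSpace X] (𝒰 : Set (Set X)) : Prop :=
  𝒰.Finite ∧ (∀ U ∈ 𝒰, IsOpen U) ∧ ⋃₀ 𝒰 = Set.univ

/-- Minimal number of members of `𝒰` needed to cover `E`. -/
noncomputable def coverNum {X : Type*} (𝒰 : Set (Set X)) (E : Set X) : ℕ :=
  sInf {k | ∃ t : Finset (Set X), ↑t ⊆ 𝒰 ∧ t.card = k ∧ E ⊆ ⋃₀ (t : Set (Set X))}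

/-- `N(𝒰 | π) = sup_y` of the covering number of the fiber `π ⁻¹ y`. -/
noncomputable def NRel {X Y : Type*} (𝒰 : Set (Set X)) (π : X → Y) : ℕ :=
  ⨆ y : Y, coverNum 𝒰 (π ⁻¹' {y})

/-- A factor map between `G`-systems. -/
def IsFactorMap (G : Type*) {X Y : Type*} [Group G] [TopologicalSpace X] [TopologicalSpace Y]
    [MulAction G X] [MulAction G Y] (π : X → Y) : Prop :=
  Continuous π ∧ Function.Surjective π ∧ ∀ (g : G) (x : X), π (g • x) = g • π x

/-- The join `⋁_{g ∈ B} g⁻¹ 𝒰`. -/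
def dynJoin {G X : Type*} [Group G] [MulAction G X] (B : Finset G) (𝒰 : Set (Set X)) :
    Set (Set X) :=
  {W | ∃ f : G → Set X, (∀ g ∈ B, f g ∈ 𝒰) ∧ W = ⋂ g ∈ B, (fun x => g • x) ⁻¹' f g}

/-- `h̄(G, 𝒰, α | π)`. -/
noncomputable def hRelU {G X Y : Type*} [Group G] [MulAction G X]
    (F : ℕ → Finset G) (𝒰 : Set (Set X)) (π : X → Y) (α : ℝ) : ℝ≥0∞ :=
  atTop.limsup fun n =>
    ENNReal.ofReal (Real.log (NRel (dynJoin (F n) 𝒰) π)) /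
      ENNReal.ofReal (((F n).card : ℝ) ^ α)

/-- `h̲(G, 𝒰, α | π)`. -/
noncomputable def hRelL {G X Y : Type*} [Group G] [MulAction G X]
    (F : ℕ → Finset G) (𝒰 : Set (Set X)) (π : X → Y) (α : ℝ) : ℝ≥0∞ :=
  atTop.liminf fun n =>
    ENNReal.ofReal (Real.log (NRel (dynJoin (F n) 𝒰) π)) /
      ENNReal.ofReal (((F n).card : ℝ) ^ α)

/-- The relative upper entropy dimension `D̄(G, 𝒰 | π)` of a cover. -/
noncomputable def DU {G X Y : Type*} [Group G] [MulAction G X]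
    (F : ℕ → Finset G) (𝒰 : Set (Set X)) (π : X → Y) : ℝ :=
  sInf {α : ℝ | 0 ≤ α ∧ hRelU F 𝒰 π α = 0}

/-- The relative lower entropy dimension `D̲(G, 𝒰 | π)` of a cover. -/
noncomputable def DL {G X Y : Type*} [Group G] [MulAction G X]
    (F : ℕ → Finset G) (𝒰 : Set (Set X)) (π : X → Y) : ℝ :=
  sInf {α : ℝ | 0 ≤ α ∧ hRelL F 𝒰 π α = 0}

/-- The relative upper entropy dimension `D̄(X, G | π)` of the system. -/
noncomputable def DUSys {G X Y : Type*} [Group G] [TopologicalSpace X] [MulAction G X]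
    (F : ℕ → Finset G) (π : X → Y) : ℝ :=
  sSup {d : ℝ | ∃ 𝒰 : Set (Set X), IsOpenCover 𝒰 ∧ d = DU F 𝒰 π}

/-- The relative lower entropy dimension `D̲(X, G | π)` of the system. -/
noncomputable def DLSys {G X Y : Type*} [Group G] [TopologicalSpace X] [MulAction G X]
    (F : ℕ → Finset G) (π : X → Y) : ℝ :=
  sSup {d : ℝ | ∃ 𝒰 : Set (Set X), IsOpenCover 𝒰 ∧ d = DL F 𝒰 π}

/-- `(1 / |F n ∩ S|) log N(⋁_{g ∈ F n ∩ S} g⁻¹ 𝒰 | π)`. -/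
noncomputable def entAlong {G X Y : Type*} [Group G] [MulAction G X]
    (F : ℕ → Finset G) (S : Set G) (𝒰 : Set (Set X)) (π : X → Y) : ℕ → ℝ≥0∞ :=
  fun n =>
    ENNReal.ofReal (Real.log (NRel (dynJoin (interF (F n) S) 𝒰) π)) /
      ((interF (F n) S).card : ℝ≥0∞)

/-- `S` is a relative entropy generating set of `𝒰` relative to `π`. -/
def IsEntGen {G X Y : Type*} [Group G] [MulAction G X]
    (F : ℕ → Finset G) (S : Set G) (𝒰 : Set (Set X)) (π : X → Y) : Prop :=
  InI F S ∧ 0 < atTop.liminf (entAlong F S 𝒰 π)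

/-- `S ∈ 𝒫(G, 𝒰 | π)` : positive relative upper entropy along `S`. -/
def InP {G X Y : Type*} [Group G] [MulAction G X]
    (F : ℕ → Finset G) (S : Set G) (𝒰 : Set (Set X)) (π : X → Y) : Prop :=
  InI F S ∧ 0 < atTop.limsup (entAlong F S 𝒰 π)

/-- `D̄_e(G, 𝒰 | π)`. -/
noncomputable def DeU {G X Y : Type*} [Group G] [MulAction G X]
    (F : ℕ → Finset G) (𝒰 : Set (Set X)) (π : X → Y) : ℝ :=
  sSup {d : ℝ | ∃ S : Set G, IsEntGen F S 𝒰 π ∧ d = upperDim F S}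

/-- `D̲_e(G, 𝒰 | π)`. -/
noncomputable def DeL {G X Y : Type*} [Group G] [MulAction G X]
    (F : ℕ → Finset G) (𝒰 : Set (Set X)) (π : X → Y) : ℝ :=
  sSup {d : ℝ | ∃ S : Set G, IsEntGen F S 𝒰 π ∧ d = lowerDim F S}

/-- `D̄_p(G, 𝒰 | π)`. -/
noncomputable def DpU {G X Y : Type*} [Group G] [MulAction G X]
    (F : ℕ → Finset G) (𝒰 : Set (Set X)) (π : X → Y) : ℝ :=
  sSup {d : ℝ | ∃ S : Set G, InP F S 𝒰 π ∧ d = upperDim F S}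

/-- `D̲_p(G, 𝒰 | π)`. -/
noncomputable def DpL {G X Y : Type*} [Group G] [MulAction G X]
    (F : ℕ → Finset G) (𝒰 : Set (Set X)) (π : X → Y) : ℝ :=
  sSup {d : ℝ | ∃ S : Set G, InP F S 𝒰 π ∧ d = lowerDim F S}

/-- `D̄_e(X, G | π)`. -/
noncomputable def DeUSys {G X Y : Type*} [Group G] [TopologicalSpace X] [MulAction G X]
    (F : ℕ → Finset G) (π : X → Y) : ℝ :=
  sSup {d : ℝ | ∃ 𝒰 : Set (Set X), IsOpenCover 𝒰 ∧ d = DeU F 𝒰 π}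

/-- `D̲_p(X, G | π)`. -/
noncomputable def DpLSys {G X Y : Type*} [Group G] [TopologicalSpace X] [MulAction G X]
    (F : ℕ → Finset G) (π : X → Y) : ℝ :=
  sSup {d : ℝ | ∃ 𝒰 : Set (Set X), IsOpenCover 𝒰 ∧ d = DpL F 𝒰 π}

/-- The cover `{X ∖ cl B(x i, 1/k) : i}` associated with a tuple. -/
def ballCover {X : Type*} [MetricSpace X] {n : ℕ} (x : Fin n → X) (k : ℕ) : Set (Set X) :=
  {V | ∃ i : Fin n, V = (Metric.closedBall (x i) (1 / (k : ℝ)))ᶜ}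

/-- The relative entropy dimension `D̄(x₁, …, x_n | π)` of a tuple. -/
noncomputable def tupleDim {G X Y : Type*} [Group G] [MetricSpace X] [MulAction G X] {n : ℕ}
    (F : ℕ → Finset G) (x : Fin n → X) (π : X → Y) : ℝ :=
  limUnder atTop fun k : ℕ => DU F (ballCover x k) π

/-- The tuple lies on the diagonal. -/
def IsDiag {X : Type*} {n : ℕ} (x : Fin n → X) : Prop := ∀ i j, x i = x j

/-- The `n`-th relative dimension set `𝒟_n(X, G | π)`. -/
noncomputable def dimSet {G X Z : Type*} [Group G] [MetricSpace X] [MulAction G X]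
    (F : ℕ → Finset G) (π : X → Z) (n : ℕ) : Set ℝ :=
  {α : ℝ | 0 ≤ α ∧ ∃ x : Fin n → X, ¬ IsDiag x ∧ tupleDim F x π = α}

/-- The translated cover `g𝒰`. -/
def smulCover {G X : Type*} [SMul G X] (g : G) (𝒰 : Set (Set X)) : Set (Set X) :=
  (fun U => (fun x => g • x) '' U) '' 𝒰

/-- The join `𝒰 ∨ 𝒱` of two covers. -/
def covJoin {X : Type*} (𝒰 𝒱 : Set (Set X)) : Set (Set X) :=
  {W | ∃ U ∈ 𝒰, ∃ V ∈ 𝒱, W = U ∩ V}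

/-- A standard cover: two non-dense open sets covering `X`. -/
def IsStandardCover {X : Type*} [TopologicalSpace X] (𝒲 : Set (Set X)) : Prop :=
  ∃ U V : Set X, 𝒲 = {U, V} ∧ IsOpen U ∧ IsOpen V ∧ U ∪ V = Set.univ ∧
    ¬ Dense U ∧ ¬ Dense V

/-!
Write `𝒰_k(x)` for the cover by the complements of the closed `1/k`-balls around the points of
`x`. Refining a finite open cover can only raise its entropy dimension `D̄(G, · | π)` (when
`|F m|` stays bounded the monotone sequence `F` is eventually constant and every cover has
dimension `0`), so off the diagonal `k ↦ D̄(G, 𝒰_k(x) | π)` is eventually antitone and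
`D̄(x | π)` is its infimum. If `x'` is close to `x`, then `𝒰_k(x)` refines `𝒰_{k+1}(x')`, hence
`D̄(x' | π) ≤ D̄(G, 𝒰_k(x) | π)`. Thus `x ↦ D̄(x | π)` is upper semicontinuous on the open set of
off-diagonal tuples, and the set in question is the complement of `{x ∉ Δ_n : D̄(x | π) < α}`.
-/

open Set Metric

theorem Real.log_natCast_le_log_natCast {a b : ℕ} (h : a ≤ b) : Real.log a ≤ Real.log b := by
  rcases a.eq_zero_or_pos with rfl | ha
  · simpa using Real.log_natCast_nonneg b
  · exact Real.log_le_log (by exact_mod_cast ha) (by exact_mod_cast h)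

section Covers

variable {X : Type*}

def IsRefinement (𝒰 𝒱 : Set (Set X)) : Prop :=
  ∀ U ∈ 𝒰, ∃ V ∈ 𝒱, U ⊆ V

theorem IsRefinement.sUnion_subset {𝒰 𝒱 : Set (Set X)} (h : IsRefinement 𝒰 𝒱) :
    ⋃₀ 𝒰 ⊆ ⋃₀ 𝒱 := by
  rintro x ⟨U, hU, hxU⟩
  obtain ⟨V, hV, hUV⟩ := h U hU
  exact ⟨V, hV, hUV hxU⟩

theorem coverNum_le_ncard {𝒰 : Set (Set X)} (hfin : 𝒰.Finite) {E : Set X} (hE : E ⊆ ⋃₀ 𝒰) :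
    coverNum 𝒰 E ≤ 𝒰.ncard :=
  Nat.sInf_le ⟨hfin.toFinset, by simp, (ncard_eq_toFinset_card 𝒰 hfin).symm, by simpa using hE⟩

theorem coverNum_le_of_isRefinement {𝒰 𝒱 : Set (Set X)} (h : IsRefinement 𝒰 𝒱)
    (hfin : 𝒰.Finite) {E : Set X} (hE : E ⊆ ⋃₀ 𝒰) : coverNum 𝒱 E ≤ coverNum 𝒰 E := by
  classical
  have hne : {k | ∃ t : Finset (Set X), ↑t ⊆ 𝒰 ∧ t.card = k ∧
      E ⊆ ⋃₀ (t : Set (Set X))}.Nonempty :=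
    ⟨_, hfin.toFinset, by simp, rfl, by simpa using hE⟩
  obtain ⟨t, ht𝒰, htc, hEt⟩ := Nat.sInf_mem hne
  choose! φ hφ𝒱 hφ using h
  have hcov : E ⊆ ⋃₀ ↑(t.image φ) := by
    intro x hx
    obtain ⟨U, hU, hxU⟩ := hEt hx
    exact ⟨φ U, by simpa using ⟨U, hU, rfl⟩, hφ U (ht𝒰 hU) hxU⟩
  calc coverNum 𝒱 E ≤ (t.image φ).card :=
        Nat.sInf_le ⟨t.image φ, by simpa [subset_def] using fun U hU => hφ𝒱 U (ht𝒰 hU), rfl, hcov⟩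
    _ ≤ t.card := Finset.card_image_le
    _ = coverNum 𝒰 E := htc

variable {Y : Type*} {𝒰 𝒱 : Set (Set X)}

theorem NRel_le_ncard (hfin : 𝒰.Finite) (hcov : ⋃₀ 𝒰 = univ) (π : X → Y) :
    NRel 𝒰 π ≤ 𝒰.ncard :=
  ciSup_le' fun _ => coverNum_le_ncard hfin (hcov ▸ subset_univ _)

theorem NRel_le_of_isRefinement (h : IsRefinement 𝒰 𝒱) (hfin : 𝒰.Finite) (hcov : ⋃₀ 𝒰 = univ)
    (π : X → Y) : NRel 𝒱 π ≤ NRel 𝒰 π :=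
  ciSup_le' fun y => (coverNum_le_of_isRefinement h hfin (hcov ▸ subset_univ _)).trans <|
    le_ciSup (f := fun y => coverNum 𝒰 (π ⁻¹' {y}))
      ⟨𝒰.ncard, forall_mem_range.2 fun _ => coverNum_le_ncard hfin (hcov ▸ subset_univ _)⟩ y

end Covers

section DynJoin

variable {G X : Type*} [Group G] [MulAction G X] {𝒰 𝒱 : Set (Set X)}

theorem dynJoin_subset_range (B : Finset G) (𝒰 : Set (Set X)) :
    dynJoin B 𝒰 ⊆ range fun f : B → 𝒰 => ⋂ g : B, (fun x => (g : G) • x) ⁻¹' f g := by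
  rintro _ ⟨f, hf, rfl⟩
  exact ⟨fun g => ⟨f g, hf g g.2⟩, by ext; simp⟩

theorem dynJoin_finite (B : Finset G) (hfin : 𝒰.Finite) : (dynJoin B 𝒰).Finite :=
  have := hfin.to_subtype
  (finite_range _).subset (dynJoin_subset_range B 𝒰)

theorem ncard_dynJoin_le (B : Finset G) (hfin : 𝒰.Finite) :
    (dynJoin B 𝒰).ncard ≤ 𝒰.ncard ^ B.card := by
  have := hfin.to_subtype
  calc (dynJoin B 𝒰).ncard ≤ Nat.card (range fun f : B → 𝒰 => _) :=
        ncard_le_ncard (dynJoin_subset_range B 𝒰) (finite_range _)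
    _ ≤ Nat.card (B → 𝒰) := Finite.card_range_le _
    _ = 𝒰.ncard ^ B.card := by simp [Nat.card_fun]

theorem sUnion_dynJoin (B : Finset G) (hcov : ⋃₀ 𝒰 = univ) : ⋃₀ dynJoin B 𝒰 = univ := by
  refine eq_univ_of_forall fun x => ?_
  have hx : ∀ g : G, ∃ U ∈ 𝒰, g • x ∈ U := fun g => mem_sUnion.1 (hcov ▸ mem_univ (g • x))
  choose u hu𝒰 hxu using hx
  exact ⟨_, ⟨u, fun g _ => hu𝒰 g, rfl⟩, mem_iInter₂.2 fun g _ => hxu g⟩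

theorem IsRefinement.dynJoin (h : IsRefinement 𝒰 𝒱) (B : Finset G) :
    IsRefinement (dynJoin B 𝒰) (dynJoin B 𝒱) := by
  rintro _ ⟨f, hf, rfl⟩
  choose! φ hφ𝒱 hφ using h
  exact ⟨_, ⟨φ ∘ f, fun g hg => hφ𝒱 _ (hf g hg), rfl⟩,
    iInter₂_mono fun g hg => preimage_mono (hφ _ (hf g hg))⟩

end DynJoin

section EntropyDimension

variable {G X Y : Type*} [Group G] [MulAction G X] (F : ℕ → Finset G) (π : X → Y)
  {𝒰 𝒱 : Set (Set X)}

theorem DU_nonneg (𝒰 : Set (Set X)) : 0 ≤ DU F 𝒰 π :=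
  Real.sInf_nonneg fun _ hα => hα.1

theorem hRelU_mono_of_isRefinement (h : IsRefinement 𝒰 𝒱) (hfin : 𝒰.Finite)
    (hcov : ⋃₀ 𝒰 = univ) (α : ℝ) : hRelU F 𝒱 π α ≤ hRelU F 𝒰 π α :=
  limsup_le_limsup <| Eventually.of_forall fun m =>
    ENNReal.div_le_div_right (ENNReal.ofReal_le_ofReal <| Real.log_natCast_le_log_natCast <|
      NRel_le_of_isRefinement (h.dynJoin _) (dynJoin_finite _ hfin) (sUnion_dynJoin _ hcov) π) _

theorem hRelU_eq_zero_of_one_lt (hF : Tendsto (fun m => (F m).card) atTop atTop)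
    (hfin : 𝒰.Finite) (hcov : ⋃₀ 𝒰 = univ) {α : ℝ} (hα : 1 < α) : hRelU F 𝒰 π α = 0 := by
  set c : ℕ → ℝ := fun m => ((F m).card : ℝ)
  have hc : Tendsto c atTop atTop := tendsto_natCast_atTop_atTop.comp hF
  have hlog : ∀ m, Real.log (NRel (dynJoin (F m) 𝒰) π) ≤ c m * Real.log 𝒰.ncard := fun m => by
    calc Real.log (NRel (dynJoin (F m) 𝒰) π) ≤ Real.log (𝒰.ncard ^ (F m).card : ℕ) :=
          Real.log_natCast_le_log_natCast <| (NRel_le_ncard (dynJoin_finite _ hfin)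
            (sUnion_dynJoin _ hcov) π).trans (ncard_dynJoin_le _ hfin)
      _ = c m * Real.log 𝒰.ncard := by push_cast; rw [Real.log_pow]
  have hbound : ∀ᶠ m in atTop,
      ENNReal.ofReal (Real.log (NRel (dynJoin (F m) 𝒰) π)) / ENNReal.ofReal (c m ^ α) ≤
        ENNReal.ofReal (Real.log 𝒰.ncard * c m ^ (-(α - 1))) := by
    filter_upwards [hc.eventually_gt_atTop 0] with m hm
    rw [← ENNReal.ofReal_div_of_pos (by positivity)]
    refine ENNReal.ofReal_le_ofReal ?_
    calc Real.log (NRel (dynJoin (F m) 𝒰) π) / c m ^ α ≤ c m * Real.log 𝒰.ncard / c m ^ α := by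
          gcongr; exact hlog m
      _ = Real.log 𝒰.ncard * c m ^ (-(α - 1)) := by
          rw [Real.rpow_neg hm.le, Real.rpow_sub_one hm.ne']
          field_simp
  have hlim : Tendsto (fun m => ENNReal.ofReal (Real.log 𝒰.ncard * c m ^ (-(α - 1)))) atTop
      (𝓝 0) := by
    have := ENNReal.tendsto_ofReal
      (((tendsto_rpow_neg_atTop (by linarith : 0 < α - 1)).comp hc).const_mul (Real.log 𝒰.ncard))
    rwa [mul_zero, ENNReal.ofReal_zero] at this
  exact le_antisymm ((limsup_le_limsup hbound).trans hlim.limsup_eq.le) bot_le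

theorem DU_eq_zero_of_eventually_const {N : ℕ} (hN : ∀ m ≥ N, F m = F N) (𝒰 : Set (Set X)) :
    DU F 𝒰 π = 0 := by
  set a := ENNReal.ofReal (Real.log (NRel (dynJoin (F N) 𝒰) π))
  have hconst : ∀ α, hRelU F 𝒰 π α = a / ENNReal.ofReal (((F N).card : ℝ) ^ α) := fun α =>
    (limsup_congr (eventually_atTop.2 ⟨N, fun m hm => by rw [hN m hm]⟩)).trans (limsup_const _)
  by_cases ha : a = 0
  · have : {α : ℝ | 0 ≤ α ∧ hRelU F 𝒰 π α = 0} = Ici 0 := by ext; simp [hconst, ha]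
    rw [DU, this, csInf_Ici]
  · have : {α : ℝ | 0 ≤ α ∧ hRelU F 𝒰 π α = 0} = ∅ := by
      ext; simp [hconst, ha, ENNReal.div_eq_zero_iff]
    rw [DU, this, Real.sInf_empty]

omit [Group G] [MulAction G X] in
theorem exists_eventually_const_of_monotone (hF : Monotone F)
    (hcard : ¬ Tendsto (fun m => (F m).card) atTop atTop) : ∃ N, ∀ m ≥ N, F m = F N := by
  have hmono : Monotone fun m => (F m).card := fun _ _ h => Finset.card_le_card (hF h)
  have hbdd : BddAbove (range fun m => (F m).card) := by
    contrapose! hcard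
    exact tendsto_atTop_atTop_of_monotone hmono fun b =>
      let ⟨_, ⟨m, rfl⟩, hm⟩ := not_bddAbove_iff.1 hcard b; ⟨m, hm.le⟩
  obtain ⟨N, hN⟩ := Nat.sSup_mem (range_nonempty _) hbdd
  exact ⟨N, fun m hm => (Finset.eq_of_subset_of_card_le (hF hm)
    ((le_csSup hbdd ⟨m, rfl⟩).trans hN.ge)).symm⟩

theorem DU_le_of_isRefinement (hF : Monotone F) (h : IsRefinement 𝒰 𝒱) (hfin : 𝒰.Finite)
    (hcov : ⋃₀ 𝒰 = univ) : DU F 𝒱 π ≤ DU F 𝒰 π := by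
  by_cases hcard : Tendsto (fun m => (F m).card) atTop atTop
  · exact csInf_le_csInf ⟨0, fun _ hα => hα.1⟩
      ⟨2, zero_le_two, hRelU_eq_zero_of_one_lt F π hcard hfin hcov one_lt_two⟩
      fun α ⟨hα, h0⟩ => ⟨hα, le_antisymm (h0 ▸ hRelU_mono_of_isRefinement F π h hfin hcov α) bot_le⟩
  · obtain ⟨N, hN⟩ := exists_eventually_const_of_monotone F hF hcard
    rw [DU_eq_zero_of_eventually_const F π hN, DU_eq_zero_of_eventually_const F π hN]

end EntropyDimension

section BallCover

variable {X : Type*} [MetricSpace X] {n : ℕ}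

theorem ballCover_finite (z : Fin n → X) (k : ℕ) : (ballCover z k).Finite :=
  (finite_range fun i => (closedBall (z i) (1 / k))ᶜ).subset fun _ ⟨i, hi⟩ => ⟨i, hi.symm⟩

theorem isRefinement_ballCover {z w : Fin n → X} {k m : ℕ}
    (h : ∀ i, closedBall (w i) (1 / m) ⊆ closedBall (z i) (1 / k)) :
    IsRefinement (ballCover z k) (ballCover w m) := by
  rintro _ ⟨i, rfl⟩
  exact ⟨_, ⟨i, rfl⟩, compl_subset_compl.2 (h i)⟩

theorem isRefinement_ballCover_of_le (z : Fin n → X) {k m : ℕ} (hk : 0 < k) (hkm : k ≤ m) :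
    IsRefinement (ballCover z k) (ballCover z m) :=
  isRefinement_ballCover fun _ => closedBall_subset_closedBall <|
    one_div_le_one_div_of_le (by exact_mod_cast hk) (by exact_mod_cast hkm)

theorem sUnion_ballCover_of_le {z : Fin n → X} {k m : ℕ} (hk : 0 < k) (hkm : k ≤ m)
    (hcov : ⋃₀ ballCover z k = univ) : ⋃₀ ballCover z m = univ :=
  univ_subset_iff.1 <| hcov ▸ (isRefinement_ballCover_of_le z hk hkm).sUnion_subset

theorem exists_sUnion_ballCover_eq_univ {z : Fin n → X} (hz : ¬ IsDiag z) :
    ∃ k, 0 < k ∧ ⋃₀ ballCover z k = univ := by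
  obtain ⟨i, j, hij⟩ : ∃ i j, z i ≠ z j := by simpa [IsDiag] using hz
  obtain ⟨k, hk⟩ := exists_nat_one_div_lt (half_pos (dist_pos.2 hij))
  refine ⟨k + 1, k.succ_pos, eq_univ_of_forall fun w => ?_⟩
  by_contra hw
  have hball : ∀ l, dist w (z l) ≤ 1 / ((k + 1 : ℕ) : ℝ) := fun l =>
    not_not.1 fun hl => hw ⟨_, ⟨l, rfl⟩, hl⟩
  have := dist_triangle_left (z i) (z j) w
  have := hball i
  have := hball j
  push_cast at *
  linarith

variable {G Y : Type*} [Group G] [MulAction G X] (F : ℕ → Finset G) (π : X → Y)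

theorem DU_ballCover_antitone (hF : Monotone F) (z : Fin n → X) {k : ℕ} (hk : 0 < k)
    (hcov : ⋃₀ ballCover z k = univ) : Antitone fun m => DU F (ballCover z (m + k)) π :=
  fun a b hab => DU_le_of_isRefinement F π hF (isRefinement_ballCover_of_le z (by omega)
    (by omega)) (ballCover_finite _ _) (sUnion_ballCover_of_le hk (by omega) hcov)

theorem tupleDim_eq_iInf (hF : Monotone F) (z : Fin n → X) {k : ℕ} (hk : 0 < k)
    (hcov : ⋃₀ ballCover z k = univ) :
    tupleDim F z π = ⨅ m, DU F (ballCover z (m + k)) π :=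
  ((tendsto_add_atTop_iff_nat k).1 <| tendsto_atTop_ciInf (DU_ballCover_antitone F π hF z hk hcov)
    ⟨0, forall_mem_range.2 fun _ => DU_nonneg F π _⟩).limUnder_eq

theorem tupleDim_le_DU (hF : Monotone F) (z : Fin n → X) {k : ℕ} (hk : 0 < k)
    (hcov : ⋃₀ ballCover z k = univ) : tupleDim F z π ≤ DU F (ballCover z k) π := by
  rw [tupleDim_eq_iInf F π hF z hk hcov]
  exact (ciInf_le ⟨0, forall_mem_range.2 fun _ => DU_nonneg F π _⟩ 0).trans_eq (by rw [zero_add])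

theorem upperSemicontinuousAt_tupleDim (hF : Monotone F) {x : Fin n → X} (hx : ¬ IsDiag x) :
    UpperSemicontinuousAt (fun x => tupleDim F x π) x := by
  refine upperSemicontinuousAt_iff.2 fun α hα => ?_
  obtain ⟨k₀, hk₀, hcov₀⟩ := exists_sUnion_ballCover_eq_univ hx
  rw [tupleDim_eq_iInf F π hF x hk₀ hcov₀] at hα
  obtain ⟨m, hm⟩ := exists_lt_of_ciInf_lt hα
  have hk : 0 < m + k₀ := by omega
  have hcov : ⋃₀ ballCover x (m + k₀) = univ := sUnion_ballCover_of_le hk₀ (by omega) hcov₀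
  -- moving each point by less than the gap between the radii `1/k` and `1/(k+1)`
  -- keeps the smaller balls around the new points inside the larger ones
  have hδ : 0 < 1 / ((m + k₀ : ℕ) : ℝ) - 1 / ((m + k₀ + 1 : ℕ) : ℝ) :=
    sub_pos.2 <| one_div_lt_one_div_of_lt (by exact_mod_cast hk) (by push_cast; linarith)
  filter_upwards [ball_mem_nhds x hδ] with x' hx'
  have href : IsRefinement (ballCover x (m + k₀)) (ballCover x' (m + k₀ + 1)) :=
    isRefinement_ballCover fun i => closedBall_subset_closedBall' <| by
      linarith [(dist_le_pi_dist x' x i).trans_lt (mem_ball.1 hx')]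
  calc tupleDim F x' π ≤ DU F (ballCover x' (m + k₀ + 1)) π :=
        tupleDim_le_DU F π hF x' (by omega) (univ_subset_iff.1 (hcov ▸ href.sUnion_subset))
    _ ≤ DU F (ballCover x (m + k₀)) π :=
        DU_le_of_isRefinement F π hF href (ballCover_finite _ _) hcov
    _ < α := hm

end BallCover

theorem isClosed_setOf_isDiag {X : Type*} [TopologicalSpace X] [T2Space X] {n : ℕ} :
    IsClosed {x : Fin n → X | IsDiag x} := by
  simp only [IsDiag, ofPred_forall]
  exact isClosed_iInter fun i => isClosed_iInter fun j =>
    isClosed_eq (continuous_apply i) (continuous_apply j)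

theorem stmt16_general {G X Y : Type*} [Group G] [MetricSpace X] [MulAction G X] (π : X → Y)
    (F : ℕ → Finset G) (hFmono : ∀ n, F n ⊆ F (n + 1)) {n : ℕ} (α : ℝ) :
    IsClosed ({x : Fin n → X | ¬ IsDiag x ∧ α ≤ tupleDim F x π} ∪
      {x : Fin n → X | IsDiag x}) := by
  rw [← isOpen_compl_iff, isOpen_iff_mem_nhds]
  intro x hx
  have hxd : ¬ IsDiag x := fun h => hx (Or.inr h)
  have hlt : tupleDim F x π < α := lt_of_not_ge fun h => hx (Or.inl ⟨hxd, h⟩)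
  filter_upwards [isClosed_setOf_isDiag.isOpen_compl.mem_nhds hxd,
    upperSemicontinuousAt_tupleDim F π (monotone_nat_of_le_succ hFmono) hxd α hlt]
    with x' hx'd hx'lt
  rintro (⟨-, hle⟩ | hdiag)
  · exact hle.not_gt hx'lt
  · exact hx'd hdiag

theorem stmt16 {G X Y : Type*} [Group G] [Countable G]
    [MetricSpace X] [CompactSpace X] [MetricSpace Y] [CompactSpace Y]
    [MulAction G X] [MulAction G Y]
    (hcX : ∀ g : G, Continuous fun x : X => g • x)
    (hcY : ∀ g : G, Continuous fun y : Y => g • y)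
    (π : X → Y) (hπ : IsFactorMap G π)
    (F : ℕ → Finset G) (hF : IsFolnerSeq G F) (hFmono : ∀ n, F n ⊆ F (n + 1))
    {n : ℕ} (hn : 2 ≤ n) (α : ℝ) (hα : 0 ≤ α) :
    IsClosed ({x : Fin n → X | ¬ IsDiag x ∧ α ≤ tupleDim F x π} ∪
      {x : Fin n → X | IsDiag x}) :=
  stmt16_general π F hFmono α
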